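/- If the orders ∅S and ∅S' coincide, then for any sequence R, the orders ∅(R ++ S) and ∅(R ++ S') coincide. -/

import Mathlib

/-- Propositional formulas over variables of type `α`. -/
inductive PropForm (α : Type) : Type
  | var : α → PropForm α
  | tru : PropForm α
  | fls : PropForm α
  | neg : PropForm α → PropForm α
  | conj : PropForm α → PropForm α → PropForm α
  | disj : PropForm α → PropForm α → PropForm α

namespace PropForm
/-- Evaluation of a formula in a valuation (model). -/
def eval {α : Type} (v : α → Bool) : PropForm α → Bool
  | var a => v a
  | tru => true
  | fls => false
  | neg f => !(eval v f)
  | conj f g => eval v f && eval v g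
  | disj f g => eval v f || eval v g
end PropForm

/-- A model `I` satisfies formula `A`. -/
def Sat {α : Type} (I : α → Bool) (A : PropForm α) : Prop := PropForm.eval I A = true

/-- The order induced by a single formula: `I ≤_A J` iff `I ⊨ A` or `J ⊭ A`. -/
def leA {α : Type} (A : PropForm α) (I J : α → Bool) : Prop := Sat I A ∨ ¬ Sat J A

/-- Auxiliary: the order generated from the flat state by a revision sequence given
in reverse order (most recent revision first). -/
def leSeqRev {α : Type} (I J : α → Bool) : List (PropForm α) → Prop
  | [] => True
  | A :: S' => leA A I J ∧ (¬ leA A J I ∨ leSeqRev I J S')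

/-- `I ≤_{∅S} J`: the order generated from the flat state by the sequence `S` of
lexicographic revisions (given in chronological order, so the last element of `S`
is the most recent revision).  It satisfies `leSeq [] I J ↔ True` and
`leSeq (S' ++ [A]) I J ↔ leA A I J ∧ (¬ leA A J I ∨ leSeq S' I J)`. -/
def leSeq {α : Type} (S : List (PropForm α)) (I J : α → Bool) : Prop :=
  leSeqRev I J S.reverse

/-- `I ≡_{∅S} J`: equivalence of models in the order generated by `S`. -/
def equivSeq {α : Type} (S : List (PropForm α)) (I J : α → Bool) : Prop :=
  leSeq S I J ∧ leSeq S J I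

/-!
A lexicographic revision sequence compares two models first by its most recent revisions:
`I ≤_{∅(R ++ S)} J` holds iff `I ≤_{∅S} J` and, should `J ≤_{∅S} I` hold as well, `I ≤_{∅R} J`.
So `∅(R ++ S)` depends on `S` only through the order `∅S`.
-/

theorem leSeqRev_append {α : Type} (I J : α → Bool) (L M : List (PropForm α)) :
    leSeqRev I J (L ++ M) ↔ leSeqRev I J L ∧ (leSeqRev J I L → leSeqRev I J M) := by
  induction L with
  | nil => simp [leSeqRev]
  | cons A T ih =>
    simp only [List.cons_append, leSeqRev, ih]
    tauto

theorem leSeq_append {α : Type} (R S : List (PropForm α)) (I J : α → Bool) :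
    leSeq (R ++ S) I J ↔ leSeq S I J ∧ (leSeq S J I → leSeq R I J) := by
  simp only [leSeq, List.reverse_append, leSeqRev_append]

/-- STATEMENT 15: if `∅S` and `∅S'` coincide then `∅(R++S)` and `∅(R++S')` coincide. -/
theorem coincide_prefix {α : Type} (S S' : List (PropForm α))
    (h : ∀ I J : α → Bool, leSeq S I J ↔ leSeq S' I J) (R : List (PropForm α)) :
    ∀ I J : α → Bool, leSeq (R ++ S) I J ↔ leSeq (R ++ S') I J := by
  intro I J
  rw [leSeq_append, leSeq_append, h I J, h J I]
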